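/- Let K ⊆ ℝ^{n+s} be a centrally symmetric convex body symmetric with respect to ℝⁿ (the first n coordinates). If (x,y) ∈ S(K,t), then (x,0) ∈ S(K,t), where S(K,t) = {z ∈ int(K) : Vol(K)·Vol((K−z)°) ≤ t·Vol(B₂^{n+s})²}. -/

import Mathlib

/-!
Write `w = (x, 0)` and `v = z - w = (0, y)`. The perspective map `u ↦ u / (1 - ⟪v, u⟫)` sends
`(K - w)°` into `(K - z)°`, and its Jacobian is `(1 - ⟪v, u⟫)^{-(n+s+1)}`. The reflection
`(a, b) ↦ (a, -b)` preserves `K`, hence `(K - w)°`, and negates `v`; averaging the Jacobian with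
its reflection and using `(1 - c)^{-k} + (1 + c)^{-k} ≥ 2` gives `Vol (K - w)° ≤ Vol (K - z)°`.
Finally `w` is the midpoint of `z` and its reflection, so it lies in the interior of `K`.
-/

open MeasureTheory

/-- The polar body `K° = {y : ⟨y,x⟩ ≤ 1 for all x ∈ K}`. -/
def polarBody {m : ℕ} (K : Set (EuclideanSpace ℝ (Fin m))) : Set (EuclideanSpace ℝ (Fin m)) :=
  {y | ∀ x ∈ K, (inner ℝ y x : ℝ) ≤ 1}

/-- Reflection of `ℝ^{n+s}` fixing the first `n` coordinates and negating the rest. -/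
def reflLast (n s : ℕ) (z : EuclideanSpace ℝ (Fin (n + s))) : EuclideanSpace ℝ (Fin (n + s)) :=
  WithLp.toLp 2 (fun i : Fin (n + s) => if (i : ℕ) < n then z i else -z i)

/-- `(a,b) ↦ (a,0)`: zeroing out the last `s` coordinates. -/
def projFirst (n s : ℕ) (z : EuclideanSpace ℝ (Fin (n + s))) : EuclideanSpace ℝ (Fin (n + s)) :=
  WithLp.toLp 2 (fun i : Fin (n + s) => if (i : ℕ) < n then z i else 0)

/-- The Santaló region of a convex body `K`:
`S(K,t) = {z ∈ int K : Vol(K)·Vol((K−z)°) ≤ t·Vol(B₂^{n+s})²}`. -/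
noncomputable def santaloRegionBody {m : ℕ} (K : Set (EuclideanSpace ℝ (Fin m))) (t : ℝ) :
    Set (EuclideanSpace ℝ (Fin m)) :=
  {z ∈ interior K | volume K * volume (polarBody ((fun x => x - z) '' K))
      ≤ ENNReal.ofReal t * volume (Metric.ball (0 : EuclideanSpace ℝ (Fin m)) 1) ^ 2}

open scoped RealInnerProductSpace ENNReal

theorem LinearMap.det_id_add_smulRight {K M : Type*} [Field K] [AddCommGroup M] [Module K M]
    [FiniteDimensional K M] (f : M →ₗ[K] K) (u : M) :
    LinearMap.det (LinearMap.id + f.smulRight u) = 1 + f u := by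
  let b := Module.finBasis K M
  have hM : LinearMap.toMatrix b b (LinearMap.id + f.smulRight u) =
      1 + Matrix.replicateCol (Fin 1) (b.repr u) * Matrix.replicateRow (Fin 1) (f ∘ b) := by
    ext i j
    simp [LinearMap.toMatrix_apply, Matrix.one_apply, Finsupp.single_apply, eq_comm, mul_comm,
      Matrix.mul_apply]
  rw [← LinearMap.det_toMatrix b, hM]
  refine (Matrix.det_one_add_replicateCol_mul_replicateRow _ _).trans ?_
  conv_rhs => rw [← b.sum_repr u]
  simp only [dotProduct, Function.comp_apply, map_sum, map_smul, smul_eq_mul, mul_comm]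

theorem two_le_inv_add_inv_of_mul_le_one {x y : ℝ} (hx : 0 < x) (hy : 0 < y) (hxy : x * y ≤ 1) :
    2 ≤ x⁻¹ + y⁻¹ := by
  have hinv : 1 ≤ x⁻¹ * y⁻¹ := by
    rw [← mul_inv]; exact one_le_inv₀ (by positivity) |>.mpr hxy
  nlinarith [sq_nonneg (x⁻¹ - y⁻¹), inv_pos.mpr hx, inv_pos.mpr hy]

theorem two_le_inv_one_sub_pow_add_inv_one_add_pow {c : ℝ} (hc : |c| < 1) (k : ℕ) :
    2 ≤ ((1 - c) ^ k)⁻¹ + ((1 + c) ^ k)⁻¹ := by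
  obtain ⟨hc₁, hc₂⟩ := abs_lt.mp hc
  refine two_le_inv_add_inv_of_mul_le_one (pow_pos (by linarith) k) (pow_pos (by linarith) k) ?_
  rw [← mul_pow]
  exact pow_le_one₀ (by nlinarith) (by nlinarith [sq_nonneg c])

theorem LinearIsometryEquiv.map_mem_interior {E : Type*} [NormedAddCommGroup E]
    [NormedSpace ℝ E] (R : E ≃ₗᵢ[ℝ] E) {S : Set E} (hRS : R ⁻¹' S = S) {x : E}
    (hx : x ∈ interior S) : R x ∈ interior S := by
  rw [← Set.mem_preimage, ← R.coe_toHomeomorph, R.toHomeomorph.preimage_interior,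
    R.coe_toHomeomorph, hRS]
  exact hx

section InnerProductSpace

variable {E : Type*} [NormedAddCommGroup E] [InnerProductSpace ℝ E]

noncomputable def perspectiveMap (v y : E) : E := (1 - ⟪v, y⟫)⁻¹ • y

theorem perspectiveMap_injOn (v : E) : Set.InjOn (perspectiveMap v) {u | ⟪v, u⟫ ≠ 1} := by
  intro u hu u' hu' h
  have hu₀ : 1 - ⟪v, u⟫ ≠ 0 := sub_ne_zero.mpr (Ne.symm hu)
  have hu₀' : 1 - ⟪v, u'⟫ ≠ 0 := sub_ne_zero.mpr (Ne.symm hu')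
  have hc : ⟪v, u⟫ = ⟪v, u'⟫ := by
    have := congrArg (inner ℝ v) h
    simp only [perspectiveMap, inner_smul_right] at this
    field_simp at this
    linarith
  simpa [perspectiveMap, hc, hu₀'] using h

theorem hasFDerivAt_perspectiveMap {v u : E} (hu : ⟪v, u⟫ ≠ 1) :
    HasFDerivAt (perspectiveMap v) ((1 - ⟪v, u⟫)⁻¹ • (ContinuousLinearMap.id ℝ E +
      ((1 - ⟪v, u⟫)⁻¹ • innerSL ℝ v).smulRight u)) u := by
  have hu₀ : 1 - ⟪v, u⟫ ≠ 0 := sub_ne_zero.mpr (Ne.symm hu)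
  have hden : HasFDerivAt (fun y => 1 - ⟪v, y⟫) (-innerSL ℝ v) u := by
    simpa using (innerSL ℝ v).hasFDerivAt.const_sub (1 : ℝ)
  convert ((hasDerivAt_inv hu₀).comp_hasFDerivAt u hden).smul (hasFDerivAt_id u) using 1
  · rfl
  · ext y
    simp only [smul_add, add_apply, smul_apply, ContinuousLinearMap.id_apply,
      ContinuousLinearMap.smulRight_apply, coe_innerSL_apply, smul_eq_mul, smul_smul,
      Function.comp_apply, smul_neg, neg_smul, neg_neg, id_eq, add_right_inj]
    congr 1
    field_simp

theorem det_fderiv_perspectiveMap [FiniteDimensional ℝ E] {v u : E} (hu : ⟪v, u⟫ ≠ 1) :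
    (fderiv ℝ (perspectiveMap v) u).det = ((1 - ⟪v, u⟫) ^ (Module.finrank ℝ E + 1))⁻¹ := by
  have hu₀ : 1 - ⟪v, u⟫ ≠ 0 := sub_ne_zero.mpr (Ne.symm hu)
  rw [(hasFDerivAt_perspectiveMap hu).fderiv, ContinuousLinearMap.det,
    ContinuousLinearMap.toLinearMap_smul, LinearMap.det_smul]
  erw [LinearMap.det_id_add_smulRight]
  simp only [ContinuousLinearMap.toLinearMap_smul, LinearMap.smul_apply,
    ContinuousLinearMap.coe_coe, innerSL_apply_apply, smul_eq_mul]
  rw [show 1 + (1 - ⟪v, u⟫)⁻¹ * ⟪v, u⟫ = (1 - ⟪v, u⟫)⁻¹ by field_simp; ring, ← pow_succ, inv_pow]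

theorem measure_image_perspectiveMap [FiniteDimensional ℝ E] [MeasurableSpace E] [BorelSpace E]
    (μ : Measure E) [μ.IsAddHaarMeasure] {v : E} {B : Set E} (hB : MeasurableSet B)
    (hB₁ : ∀ u ∈ B, ⟪v, u⟫ < 1) :
    μ (perspectiveMap v '' B) =
      ∫⁻ u in B, ENNReal.ofReal ((1 - ⟪v, u⟫) ^ (Module.finrank ℝ E + 1))⁻¹ ∂μ := by
  have hderiv : ∀ u ∈ B, HasFDerivWithinAt (perspectiveMap v) (fderiv ℝ (perspectiveMap v) u) B u :=
    fun u hu =>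
      (hasFDerivAt_perspectiveMap (hB₁ u hu).ne).differentiableAt.hasFDerivAt.hasFDerivWithinAt
  have hinj : Set.InjOn (perspectiveMap v) B :=
    (perspectiveMap_injOn v).mono fun u hu => (hB₁ u hu).ne
  rw [← setLIntegral_one, lintegral_image_eq_lintegral_abs_det_fderiv_mul μ hB hderiv hinj]
  refine setLIntegral_congr_fun hB fun u hu => ?_
  rw [mul_one, det_fderiv_perspectiveMap (hB₁ u hu).ne,
    abs_of_pos (inv_pos.mpr (pow_pos (sub_pos.mpr (hB₁ u hu)) _))]

theorem volume_le_setLIntegral_inv_one_sub_inner_pow [FiniteDimensional ℝ E]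
    [MeasurableSpace E] [BorelSpace E] (R : E ≃ₗᵢ[ℝ] E) {v : E} {B : Set E} (hRv : R v = -v)
    (hRB : R ⁻¹' B = B) (hB₁ : ∀ u ∈ B, |⟪v, u⟫| < 1) (k : ℕ) :
    volume B ≤ ∫⁻ u in B, ENNReal.ofReal ((1 - ⟪v, u⟫) ^ k)⁻¹ := by
  set F : E → ℝ≥0∞ := fun u => ENNReal.ofReal ((1 - ⟪v, u⟫) ^ k)⁻¹
  have hF : Measurable F := by fun_prop
  have hFR : ∀ u, F (R u) = ENNReal.ofReal ((1 + ⟪v, u⟫) ^ k)⁻¹ := fun u => by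
    have h : ⟪v, R u⟫ = -⟪v, u⟫ := by rw [← R.inner_map_map v u, hRv, inner_neg_left, neg_neg]
    simp only [F, h, sub_neg_eq_add]
  have hsymm : ∫⁻ u in B, F (R u) = ∫⁻ u in B, F u := by
    simpa [hRB] using R.measurePreserving.setLIntegral_comp_preimage_emb
      R.toHomeomorph.measurableEmbedding F B
  have hdouble : 2 * volume B ≤ 2 * ∫⁻ u in B, F u :=
    calc 2 * volume B = ∫⁻ _ in B, 2 := (setLIntegral_const B 2).symm
      _ ≤ ∫⁻ u in B, (F u + F (R u)) := setLIntegral_mono (by fun_prop) fun u hu => by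
          obtain ⟨hu₁, hu₂⟩ := abs_lt.mp (hB₁ u hu)
          rw [hFR, ← ENNReal.ofReal_add (inv_nonneg.mpr (pow_nonneg (by linarith) _))
            (inv_nonneg.mpr (pow_nonneg (by linarith) _)), ← ENNReal.ofReal_ofNat]
          exact ENNReal.ofReal_le_ofReal (two_le_inv_one_sub_pow_add_inv_one_add_pow (hB₁ u hu) k)
      _ = 2 * ∫⁻ u in B, F u := by rw [lintegral_add_left hF, hsymm, two_mul]
  exact (ENNReal.mul_le_mul_iff_right two_ne_zero ENNReal.ofNat_ne_top).mp hdouble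

end InnerProductSpace

section Polar

variable {m : ℕ}

theorem isClosed_polarBody (S : Set (EuclideanSpace ℝ (Fin m))) : IsClosed (polarBody S) := by
  simp only [polarBody, Set.ofPred_forall]
  exact isClosed_biInter fun x _ => isClosed_le (by fun_prop) continuous_const

theorem inner_lt_one_of_mem_polarBody {S : Set (EuclideanSpace ℝ (Fin m))}
    {p u : EuclideanSpace ℝ (Fin m)} (hp : p ∈ interior S) (hu : u ∈ polarBody S) :
    ⟪u, p⟫ < 1 := by
  rcases eq_or_ne u 0 with rfl | hu₀
  · simp
  have hlim : Filter.Tendsto (fun ε : ℝ => p + ε • u) (nhdsWithin 0 (Set.Ioi 0)) (nhds p) :=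
    tendsto_nhdsWithin_of_tendsto_nhds
      ((by fun_prop : Continuous fun ε : ℝ => p + ε • u).tendsto' 0 p (by simp))
  obtain ⟨ε, hεS, hε⟩ :=
    ((hlim.eventually (mem_interior_iff_mem_nhds.mp hp)).and self_mem_nhdsWithin).exists
  have := hu _ hεS
  rw [inner_add_right, real_inner_smul_right, real_inner_self_eq_norm_sq] at this
  have : 0 < ε * ‖u‖ ^ 2 := mul_pos hε (by positivity)
  linarith

theorem perspectiveMap_mapsTo_polarBody {S : Set (EuclideanSpace ℝ (Fin m))}
    {v : EuclideanSpace ℝ (Fin m)} (hv : v ∈ interior S) :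
    Set.MapsTo (perspectiveMap v) (polarBody S) (polarBody ((· - v) '' S)) := by
  rintro u hu _ ⟨k, hk, rfl⟩
  have hvu : ⟪v, u⟫ < 1 := real_inner_comm u v ▸ inner_lt_one_of_mem_polarBody hv hu
  rw [perspectiveMap, real_inner_smul_left, inner_sub_right, real_inner_comm v u,
    inv_mul_le_iff₀ (by linarith), mul_one]
  linarith [hu k hk]

theorem preimage_polarBody (R : EuclideanSpace ℝ (Fin m) ≃ₗᵢ[ℝ] EuclideanSpace ℝ (Fin m))
    (S : Set (EuclideanSpace ℝ (Fin m))) : R ⁻¹' polarBody S = polarBody (R ⁻¹' S) := by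
  ext u
  refine ⟨fun h x hx => ?_, fun h x hx => ?_⟩
  · simpa using h (R x) hx
  · have := h (R.symm x) (by simpa using hx)
    rwa [← R.inner_map_map, R.apply_symm_apply] at this

theorem volume_polarBody_le_volume_polarBody_sub {S : Set (EuclideanSpace ℝ (Fin m))}
    {v : EuclideanSpace ℝ (Fin m)} (R : EuclideanSpace ℝ (Fin m) ≃ₗᵢ[ℝ] EuclideanSpace ℝ (Fin m))
    (hRv : R v = -v) (hRS : R ⁻¹' S = S) (hv : v ∈ interior S) :
    volume (polarBody S) ≤ volume (polarBody ((· - v) '' S)) := by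
  have hB : MeasurableSet (polarBody S) := (isClosed_polarBody S).measurableSet
  have hnegv : -v ∈ interior S := hRv ▸ R.map_mem_interior hRS hv
  have hB₁ : ∀ u ∈ polarBody S, |⟪v, u⟫| < 1 := fun u hu => by
    have h₁ := inner_lt_one_of_mem_polarBody hv hu
    have h₂ := inner_lt_one_of_mem_polarBody hnegv hu
    rw [inner_neg_right] at h₂
    rw [real_inner_comm] at h₁ h₂
    exact abs_lt.mpr ⟨by linarith, h₁⟩
  calc volume (polarBody S)
      ≤ ∫⁻ u in polarBody S, ENNReal.ofReal ((1 - ⟪v, u⟫) ^ (Module.finrank ℝ _ + 1))⁻¹ :=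
        volume_le_setLIntegral_inv_one_sub_inner_pow R hRv (by rw [preimage_polarBody, hRS]) hB₁ _
    _ = volume (perspectiveMap v '' polarBody S) :=
        (measure_image_perspectiveMap volume hB fun u hu => (abs_lt.mp (hB₁ u hu)).2).symm
    _ ≤ volume (polarBody ((· - v) '' S)) :=
        measure_mono (perspectiveMap_mapsTo_polarBody hv).image_subset

end Polar

section Reflection

variable {n s : ℕ}

theorem reflLast_reflLast (z : EuclideanSpace ℝ (Fin (n + s))) :
    reflLast n s (reflLast n s z) = z := by
  ext i; simp only [reflLast]; split_ifs <;> simp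

theorem reflLast_projFirst (z : EuclideanSpace ℝ (Fin (n + s))) :
    reflLast n s (projFirst n s z) = projFirst n s z := by
  ext i; simp only [reflLast, projFirst]; split_ifs <;> simp

theorem reflLast_sub_projFirst (z : EuclideanSpace ℝ (Fin (n + s))) :
    reflLast n s (z - projFirst n s z) = -(z - projFirst n s z) := by
  ext i; simp only [reflLast, projFirst, PiLp.sub_apply, PiLp.neg_apply]; split_ifs <;> simp

theorem projFirst_eq_midpoint (z : EuclideanSpace ℝ (Fin (n + s))) :
    projFirst n s z = midpoint ℝ z (reflLast n s z) := by
  rw [midpoint_eq_smul_add]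
  ext i
  simp only [reflLast, projFirst, PiLp.smul_apply, PiLp.add_apply, smul_eq_mul, invOf_eq_inv]
  split_ifs <;> ring

variable (n s) in
noncomputable def reflLastLIE :
    EuclideanSpace ℝ (Fin (n + s)) ≃ₗᵢ[ℝ] EuclideanSpace ℝ (Fin (n + s)) :=
  LinearIsometryEquiv.piLpCongrRight 2 fun i => if (i : ℕ) < n then .refl ℝ ℝ else .neg ℝ

theorem reflLastLIE_apply (z : EuclideanSpace ℝ (Fin (n + s))) :
    reflLastLIE n s z = reflLast n s z := by
  ext i; simp only [reflLastLIE, LinearIsometryEquiv.piLpCongrRight_apply, reflLast]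
  split_ifs <;> rfl

theorem preimage_reflLastLIE {K : Set (EuclideanSpace ℝ (Fin (n + s)))}
    (hrefl : ∀ x, x ∈ K ↔ reflLast n s x ∈ K) : reflLastLIE n s ⁻¹' K = K :=
  Set.ext fun x => by rw [Set.mem_preimage, reflLastLIE_apply]; exact (hrefl x).symm

theorem volume_polarBody_sub_projFirst_le {K : Set (EuclideanSpace ℝ (Fin (n + s)))}
    (hrefl : ∀ x, x ∈ K ↔ reflLast n s x ∈ K) {z : EuclideanSpace ℝ (Fin (n + s))}
    (hz : z ∈ interior K) :
    volume (polarBody ((· - projFirst n s z) '' K)) ≤ volume (polarBody ((· - z) '' K)) := by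
  set w := projFirst n s z
  set R := reflLastLIE n s
  have hRw : R w = w := by rw [reflLastLIE_apply, reflLast_projFirst]
  have hRK : ∀ x, R x ∈ K ↔ x ∈ K := fun x => Set.ext_iff.mp (preimage_reflLastLIE hrefl) x
  have hRS : R ⁻¹' ((· - w) '' K) = (· - w) '' K := by
    ext u
    constructor
    · rintro ⟨k, hk, hku⟩
      refine ⟨R k, (hRK k).2 hk, ?_⟩
      change k - w = R u at hku
      change R k - w = u
      rw [← hRw, ← map_sub, hku, reflLastLIE_apply, reflLastLIE_apply, reflLast_reflLast]
    · rintro ⟨k, hk, rfl⟩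
      exact ⟨R k, (hRK k).2 hk, by rw [map_sub, hRw]⟩
  have htranslate : (· - (z - w)) '' ((· - w) '' K) = (· - z) '' K := by
    simp only [Set.image_image, sub_sub_sub_cancel_right]
  rw [← htranslate]
  refine volume_polarBody_le_volume_polarBody_sub R ?_ hRS ?_
  · rw [reflLastLIE_apply, reflLast_sub_projFirst]
  · exact (isOpenMap_sub_right w).image_interior_subset K ⟨z, hz, rfl⟩

end Reflection

theorem stmt13_general {n s : ℕ} (K : Set (EuclideanSpace ℝ (Fin (n + s))))
    (hconv : Convex ℝ K)
    (hrefl : ∀ x, x ∈ K ↔ reflLast n s x ∈ K)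
    (t : ℝ) (z : EuclideanSpace ℝ (Fin (n + s)))
    (hz : z ∈ santaloRegionBody K t) :
    projFirst n s z ∈ santaloRegionBody K t := by
  obtain ⟨hzK, hzVol⟩ := hz
  have hRz : reflLast n s z ∈ interior K :=
    reflLastLIE_apply z ▸ (reflLastLIE n s).map_mem_interior (preimage_reflLastLIE hrefl) hzK
  refine ⟨?_, le_trans (mul_le_mul_right (volume_polarBody_sub_projFirst_le hrefl hzK) _) hzVol⟩
  rw [projFirst_eq_midpoint]
  exact hconv.interior.segment_subset hzK hRz (midpoint_mem_segment _ _)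

/-- For `K ⊆ ℝ^{n+s}` a centrally symmetric convex body symmetric with respect to ℝⁿ,
if `(x,y) ∈ S(K,t)` then `(x,0) ∈ S(K,t)`. -/
theorem stmt13 {n s : ℕ} (K : Set (EuclideanSpace ℝ (Fin (n + s))))
    (hconv : Convex ℝ K) (hcomp : IsCompact K)
    (h0 : (0 : EuclideanSpace ℝ (Fin (n + s))) ∈ interior K)
    (hsymm : ∀ x, x ∈ K ↔ -x ∈ K)
    (hrefl : ∀ x, x ∈ K ↔ reflLast n s x ∈ K)
    (t : ℝ) (z : EuclideanSpace ℝ (Fin (n + s)))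
    (hz : z ∈ santaloRegionBody K t) :
    projFirst n s z ∈ santaloRegionBody K t :=
  stmt13_general K hconv hrefl t z hz
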